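/- arXiv:2008.09705 — 5 statements merged into one kernel-verified Lean document; each statement's English description precedes it below -/
import Mathlib

section
/- Let T : X → Y be a bounded linear map between Banach spaces. If there exists a dense linear subspace 𝒳 ⊆ X and a constant K ≥ 1 such that for every x ∈ 𝒳 there is x' ∈ ker(T) with ‖x − x'‖ ≤ K‖Tx‖, then the range T(X) is closed in Y. -/
/-- If `T : X → Y` is a bounded linear map between Banach spaces and there is a dense
linear subspace `𝒳 ⊆ X` and a constant `K ≥ 1` such that every `x ∈ 𝒳` is within
`K‖Tx‖` of the kernel of `T`, then the range of `T` is closed. -/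
theorem stmt0 {X Y : Type*} [NormedAddCommGroup X] [NormedSpace ℝ X] [CompleteSpace X]
    [NormedAddCommGroup Y] [NormedSpace ℝ Y] [CompleteSpace Y]
    (T : X →L[ℝ] Y) (𝒳 : Submodule ℝ X) (hdense : Dense (𝒳 : Set X))
    (K : ℝ) (hK : 1 ≤ K)
    (h : ∀ x ∈ 𝒳, ∃ x' ∈ LinearMap.ker (T : X →ₗ[ℝ] Y), ‖x - x'‖ ≤ K * ‖T x‖) :
    IsClosed (Set.range T) := by
  set S : Submodule ℝ X := LinearMap.ker (T : X →ₗ[ℝ] Y) with hS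
  -- Step 1 : the distance bound holds for all x by density
  have hbound : ∀ x : X, Metric.infDist x (S : Set X) ≤ K * ‖T x‖ := by
    have hcl : IsClosed {x : X | Metric.infDist x (S : Set X) ≤ K * ‖T x‖} :=
      isClosed_le (Metric.continuous_infDist_pt _) (continuous_const.mul T.continuous.norm)
    have hsub : (𝒳 : Set X) ⊆ {x : X | Metric.infDist x (S : Set X) ≤ K * ‖T x‖} := by
      intro x hx
      obtain ⟨x', hx', hle⟩ := h x hx
      exact le_trans (Metric.infDist_le_dist_of_mem hx') (by rwa [dist_eq_norm])
    intro x
    have : closure (𝒳 : Set X) ⊆ {x : X | Metric.infDist x (S : Set X) ≤ K * ‖T x‖} :=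
      closure_minimal hsub hcl
    exact this (hdense x)
  have hnorm_mk : ∀ x : X, ‖(Submodule.Quotient.mk x : X ⧸ S)‖ = Metric.infDist x (S : Set X) :=
    fun x => QuotientAddGroup.norm_mk (S := S.toAddSubgroup) x
  -- the induced map on the quotient
  let f0 : X ⧸ S →ₗ[ℝ] Y := S.liftQ T.toLinearMap le_rfl
  have hf0 : ∀ x : X, f0 (Submodule.Quotient.mk x) = T x := fun x => rfl
  have hfb : ∀ q : X ⧸ S, ‖f0 q‖ ≤ ‖T‖ * ‖q‖ := by
    intro q
    refine le_of_forall_pos_le_add (fun ε hε => ?_)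
    obtain ⟨m, hm, hmlt⟩ := Submodule.Quotient.norm_mk_lt q (div_pos hε (by positivity : (0:ℝ) < ‖T‖ + 1))
    calc ‖f0 q‖ = ‖T m‖ := by rw [← hm, hf0]
      _ ≤ ‖T‖ * ‖m‖ := T.le_opNorm m
      _ ≤ ‖T‖ * (‖q‖ + ε / (‖T‖ + 1)) := by
          exact mul_le_mul_of_nonneg_left hmlt.le (norm_nonneg T)
      _ = ‖T‖ * ‖q‖ + ‖T‖ * (ε / (‖T‖ + 1)) := by ring
      _ ≤ ‖T‖ * ‖q‖ + ε := by
          have h1 : ‖T‖ * (ε / (‖T‖ + 1)) ≤ (‖T‖ + 1) * (ε / (‖T‖ + 1)) := by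
            apply mul_le_mul_of_nonneg_right (by linarith) (by positivity)
          have h2 : (‖T‖ + 1) * (ε / (‖T‖ + 1)) = ε := by
            field_simp
          linarith
  let f : X ⧸ S →L[ℝ] Y := f0.mkContinuous ‖T‖ hfb
  have hanti : AntilipschitzWith K.toNNReal f := by
    apply f.antilipschitz_of_bound
    intro q
    obtain ⟨m, hm⟩ := Submodule.Quotient.mk_surjective S q
    rw [← hm]
    have : ‖f (Submodule.Quotient.mk m)‖ = ‖T m‖ := rfl
    rw [this, hnorm_mk]
    calc Metric.infDist m (S : Set X) ≤ K * ‖T m‖ := hbound m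
      _ ≤ K.toNNReal * ‖T m‖ := by
          apply mul_le_mul_of_nonneg_right _ (norm_nonneg _)
          simp [Real.coe_toNNReal', le_max_iff]
  have hrange : Set.range f = Set.range T := by
    ext y
    constructor
    · rintro ⟨q, rfl⟩
      obtain ⟨m, rfl⟩ := Submodule.Quotient.mk_surjective S q
      exact ⟨m, rfl⟩
    · rintro ⟨x, rfl⟩
      exact ⟨Submodule.Quotient.mk x, rfl⟩
  rw [← hrange]
  exact hanti.isClosed_range f.uniformContinuous
end

section
/- Let a, b, e be elements of a C*-algebra with e = e* and a = ae = ea = be = eb. Then for any continuous function f on the nonnegative reals and any complex number λ, one has a·f((λ+b)*(λ+b)) = a·f((λ+a)*(λ+a)) (functional calculus computed in the unitization). -/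
open Polynomial in
/-- In a unital C*-algebra, if `e = e*` and `a = ae = ea = be = eb`, then for every
continuous function `f` on the nonnegative reals and every complex number `λ`,
`a · f((λ+b)*(λ+b)) = a · f((λ+a)*(λ+a))`, where `f(·)` denotes the continuous
functional calculus. -/
theorem stmt6 {A : Type*} [CStarAlgebra A] [StarModule ℂ A]
    (a b e : A) (he : star e = e)
    (h1 : a = a * e) (h2 : a = e * a) (h3 : a = b * e) (h4 : a = e * b)
    (f : ℝ → ℝ) (hf : ContinuousOn f (Set.Ici (0 : ℝ))) (lam : ℂ) :
    a * cfc f (star (algebraMap ℂ A lam + b) * (algebraMap ℂ A lam + b)) =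
      a * cfc f (star (algebraMap ℂ A lam + a) * (algebraMap ℂ A lam + a)) := by
  set c : A := algebraMap ℂ A lam with hc
  set x : A := star (c + b) * (c + b) with hxdef
  set y : A := star (c + a) * (c + a) with hydef
  -- basic consequences of the hypotheses
  have hae : a * e = a := h1.symm
  have heb : e * b = a := h4.symm
  have hstar_ae : star a * e = star a := by
    rw [← he, ← star_mul, ← h2]
  have he_sb : e * star b = star a := by
    rw [← he, ← star_mul, ← h3]
  have hsab : star a * b = star a * a := by
    nth_rewrite 1 [← hstar_ae]
    rw [mul_assoc, heb]
  have hce : c * e = e * c := by rw [hc]; exact Algebra.commutes _ _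
  have hsc_eq : star c = algebraMap ℂ A (star lam) := by
    rw [hc, algebraMap_star_comm]
  have hscc : star c * c = algebraMap ℂ A (star lam * lam) := by
    rw [map_mul, ← hsc_eq, hc]
  -- expansions
  have hx' : x = star c * c + star c * b + star b * c + star b * b := by
    rw [hxdef, star_add]; noncomm_ring
  have hy' : y = star c * c + star c * a + star a * c + star a * a := by
    rw [hydef, star_add]; noncomm_ring
  -- key absorption lemma
  have key : ∀ z : A, z * e = z → z * x = z * y ∧ (z * y) * e = z * y := by
    intro z hz
    have hzb : z * b = z * a := by
      nth_rewrite 1 [← hz]; rw [mul_assoc, heb]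
    have hzsb : z * star b = z * star a := by
      nth_rewrite 1 [← hz]; rw [mul_assoc, he_sb]
    have e2 : z * (star c * b) = z * (star c * a) := by
      rw [hsc_eq, ← mul_assoc, ← mul_assoc, ← Algebra.commutes, mul_assoc, mul_assoc, hzb]
    have e3 : z * (star b * c) = z * (star a * c) := by
      rw [← mul_assoc, ← mul_assoc, hzsb]
    have e4 : z * (star b * b) = z * (star a * a) := by
      rw [← mul_assoc, hzsb, mul_assoc, hsab]
    have f1 : z * (star c * c) * e = z * (star c * c) := by
      rw [hscc, ← Algebra.commutes, mul_assoc, hz]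
    have f2 : z * (star c * a) * e = z * (star c * a) := by
      rw [mul_assoc, mul_assoc, hae]
    have f3 : z * (star a * c) * e = z * (star a * c) := by
      rw [mul_assoc, mul_assoc, hce, ← mul_assoc (star a) e c, hstar_ae]
    have f4 : z * (star a * a) * e = z * (star a * a) := by
      rw [mul_assoc, mul_assoc, hae]
    constructor
    · rw [hx', hy', mul_add, mul_add, mul_add, mul_add, mul_add, mul_add, e2, e3, e4]
    · rw [hy', mul_add, mul_add, mul_add, add_mul, add_mul, add_mul, f1, f2, f3, f4]
  -- powers
  have pow_key : ∀ n : ℕ, a * x ^ n = a * y ^ n ∧ (a * y ^ n) * e = a * y ^ n := by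
    intro n
    induction n with
    | zero => simpa using hae
    | succ n ih =>
      obtain ⟨ih1, ih2⟩ := ih
      have hk := key (a * y ^ n) ih2
      refine ⟨?_, ?_⟩
      · rw [pow_succ, pow_succ, ← mul_assoc a (x ^ n) x, ← mul_assoc a (y ^ n) y, ih1, hk.1]
      · rw [pow_succ, ← mul_assoc a (y ^ n) y, hk.2]
  -- positivity and self-adjointness
  have hx : IsSelfAdjoint x := IsSelfAdjoint.star_mul_self (c + b)
  have hy : IsSelfAdjoint y := IsSelfAdjoint.star_mul_self (c + a)
  set M : ℝ := max (‖x‖ * ‖(1 : A)‖) (‖y‖ * ‖(1 : A)‖) with hM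
  set S : Set ℝ := Set.Icc (0 : ℝ) M with hS
  haveI : CompactSpace S := isCompact_iff_compactSpace.mp (by rw [hS]; exact isCompact_Icc)
  have hSx : spectrum ℝ x ⊆ S := by
    intro t ht
    exact ⟨spectrum_star_mul_self_nonneg t ht,
      le_trans (Real.le_norm_self t) (le_trans (spectrum.norm_le_norm_mul_of_mem ht) (le_max_left _ _))⟩
  have hSy : spectrum ℝ y ⊆ S := by
    intro t ht
    exact ⟨spectrum_star_mul_self_nonneg t ht,
      le_trans (Real.le_norm_self t) (le_trans (spectrum.norm_le_norm_mul_of_mem ht) (le_max_right _ _))⟩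
  have hS_Ici : S ⊆ Set.Ici (0 : ℝ) := fun t ht => ht.1
  -- the two superset functional calculi
  set Φ : C(S, ℝ) →⋆ₐ[ℝ] A := cfcHomSuperset hx hSx with hΦ
  set Ψ : C(S, ℝ) →⋆ₐ[ℝ] A := cfcHomSuperset hy hSy with hΨ
  -- polynomials map correctly
  have hΦp : ∀ p : ℝ[X], Φ (p.toContinuousMapOn S) = aeval x p := by
    have hh : (Φ.toAlgHom.comp (toContinuousMapOnAlgHom S)) = aeval x := by
      apply Polynomial.algHom_ext
      simp only [AlgHom.comp_apply, toContinuousMapOnAlgHom_apply, aeval_X]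
      rw [toContinuousMapOn_X_eq_restrict_id]
      exact cfcHomSuperset_id hx hSx
    intro p
    exact congrFun (congrArg DFunLike.coe hh) p
  have hΨp : ∀ p : ℝ[X], Ψ (p.toContinuousMapOn S) = aeval y p := by
    have hh : (Ψ.toAlgHom.comp (toContinuousMapOnAlgHom S)) = aeval y := by
      apply Polynomial.algHom_ext
      simp only [AlgHom.comp_apply, toContinuousMapOnAlgHom_apply, aeval_X]
      rw [toContinuousMapOn_X_eq_restrict_id]
      exact cfcHomSuperset_id hy hSy
    intro p
    exact congrFun (congrArg DFunLike.coe hh) p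
  -- a * aeval x p = a * aeval y p
  have haeval : ∀ p : ℝ[X], a * aeval x p = a * aeval y p := by
    intro p
    rw [aeval_eq_sum_range, aeval_eq_sum_range, Finset.mul_sum, Finset.mul_sum]
    refine Finset.sum_congr rfl fun i _ => ?_
    rw [mul_smul_comm, mul_smul_comm, (pow_key i).1]
  -- the closed set where Φ and Ψ agree after multiplying by a
  have hZ : ∀ g : C(S, ℝ), a * Φ g = a * Ψ g := by
    have hcont : Continuous (fun g : C(S, ℝ) => a * Φ g - a * Ψ g) := by
      apply Continuous.sub
      · exact (continuous_mul_left a).comp (cfcHomSuperset_continuous hx hSx)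
      · exact (continuous_mul_left a).comp (cfcHomSuperset_continuous hy hSy)
    have hclosed : IsClosed {g : C(S, ℝ) | a * Φ g = a * Ψ g} := by
      have hpre : {g : C(S, ℝ) | a * Φ g = a * Ψ g}
          = (fun g : C(S, ℝ) => a * Φ g - a * Ψ g) ⁻¹' {0} := by
        ext g; simp [sub_eq_zero]
      rw [hpre]
      exact isClosed_singleton.preimage hcont
    have hsub : (polynomialFunctions S : Set C(S, ℝ)) ⊆ {g | a * Φ g = a * Ψ g} := by
      rw [polynomialFunctions_coe]
      rintro _ ⟨p, rfl⟩
      simp only [Set.mem_setOf_eq, toContinuousMapOnAlgHom_apply]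
      rw [hΦp, hΨp, haeval]
    have hdense : closure (polynomialFunctions S : Set C(S, ℝ)) = Set.univ := by
      have h := polynomialFunctions.topologicalClosure S
      have h2 := congrArg (SetLike.coe) h
      rwa [Subalgebra.topologicalClosure_coe, Algebra.coe_top] at h2
    intro g
    have hmem : g ∈ closure (polynomialFunctions S : Set C(S, ℝ)) := by
      rw [hdense]; trivial
    exact hclosed.closure_subset (closure_mono hsub hmem)
  -- conclude
  have hfx : ContinuousOn f (spectrum ℝ x) := hf.mono (hSx.trans hS_Ici)
  have hfy : ContinuousOn f (spectrum ℝ y) := hf.mono (hSy.trans hS_Ici)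
  have hg : Continuous (S.restrict f) := ContinuousOn.restrict (hf.mono hS_Ici)
  set g : C(S, ℝ) := ⟨S.restrict f, hg⟩ with hgdef
  have hxg : cfc f x = Φ g := by
    rw [hΦ, cfcHomSuperset_apply, cfc_apply f x hx hfx]
    congr 1
  have hyg : cfc f y = Ψ g := by
    rw [hΨ, cfcHomSuperset_apply, cfc_apply f y hy hfy]
    congr 1
  rw [hxg, hyg]
  exact hZ g
end

section
/- Let G be a locally compact Hausdorff topological groupoid in which the range map r is open. Then the multiplication map μ : G² → G is open, where G² ⊆ G × G is the set of composable pairs with the subspace topology. -/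
/-- An algebraic groupoid structure on a type `G`: every element has a source unit
`src x = x⁻¹x`, a target (range) unit `tgt x = xx⁻¹`, an inverse, and a multiplication
`mul x y` which is meaningful when `src x = tgt y`. -/
class RSGroupoid (G : Type*) where
  src : G → G
  tgt : G → G
  inv : G → G
  mul : G → G → G
  inv_inv : ∀ x, inv (inv x) = x
  tgt_inv : ∀ x, tgt (inv x) = src x
  src_inv : ∀ x, src (inv x) = tgt x
  mul_assoc' : ∀ x y z, src x = tgt y → src y = tgt z →
    mul (mul x y) z = mul x (mul y z)
  tgt_mul : ∀ x y, src x = tgt y → tgt (mul x y) = tgt x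
  src_mul : ∀ x y, src x = tgt y → src (mul x y) = src y
  tgt_mul_self : ∀ x, mul (tgt x) x = x
  mul_src_self : ∀ x, mul x (src x) = x
  mul_inv_self : ∀ x, mul x (inv x) = tgt x
  inv_mul_self : ∀ x, mul (inv x) x = src x
  src_tgt : ∀ x, src (tgt x) = tgt x
  tgt_tgt : ∀ x, tgt (tgt x) = tgt x
  src_src : ∀ x, src (src x) = src x
  tgt_src : ∀ x, tgt (src x) = src x

open RSGroupoid

/-- The unit space `G⁰` of a groupoid. -/
def RSGroupoid.units (G : Type*) [RSGroupoid G] : Set G := Set.range (tgt : G → G)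

/-- The set of composable pairs `G²`. -/
def RSGroupoid.composable (G : Type*) [RSGroupoid G] : Set (G × G) :=
  {p : G × G | src p.1 = tgt p.2}

private lemma rs_inv_mul_cancel {G : Type*} [RSGroupoid G] (x y : G)
    (h : src x = tgt y) : mul (inv x) (mul x y) = y := by
  rw [← mul_assoc' (inv x) x y (by rw [src_inv]) h, RSGroupoid.inv_mul_self, h, tgt_mul_self]

private lemma rs_mul_inv_cancel {G : Type*} [RSGroupoid G] (x y : G)
    (h : tgt x = tgt y) : mul x (mul (inv x) y) = y := by
  rw [← mul_assoc' x (inv x) y (by rw [tgt_inv]) (by rw [src_inv, h]),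
    RSGroupoid.mul_inv_self, h, tgt_mul_self]


/-- For a locally compact Hausdorff (first countable) topological groupoid whose range
map `r : G → G⁰` is open, the multiplication map `μ : G² → G` is open, where
`G² ⊆ G × G` is the set of composable pairs with the subspace topology. -/
theorem stmt9 {G : Type*} [TopologicalSpace G] [RSGroupoid G]
    [LocallyCompactSpace G] [T2Space G] [FirstCountableTopology G]
    (hinv : Continuous (RSGroupoid.inv : G → G))
    (hmul : Continuous fun p : RSGroupoid.composable G =>
      RSGroupoid.mul p.val.1 p.val.2)
    (hr : IsOpenMap (Set.rangeFactorization (RSGroupoid.tgt : G → G))) :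
    IsOpenMap fun p : RSGroupoid.composable G =>
      RSGroupoid.mul p.val.1 p.val.2 := by
  intro W hW
  rw [isOpen_iff_forall_mem_open]
  rintro z ⟨⟨⟨x, y⟩, hxy⟩, hxyW, rfl⟩
  simp only at hxy ⊢
  -- unpack openness of W
  obtain ⟨U0, hU0, hU0eq⟩ := isOpen_induced_iff.mp hW
  have hmemU0 : ((x, y) : G × G) ∈ U0 := by
    have := hxyW; rw [← hU0eq] at this; exact this
  obtain ⟨U, V, hU, hV, hxU, hyV, hUV⟩ := isOpen_prod_iff.mp hU0 x y hmemU0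
  -- the set D of pairs with equal targets, and the map s(a,c) = (a, a⁻¹c)
  set D : Set (G × G) := {p : G × G | tgt p.1 = tgt p.2} with hD
  have hsc : Continuous fun p : D => ((p.val.1, mul (inv p.val.1) p.val.2) : G × G) := by
    refine Continuous.prodMk (continuous_fst.comp continuous_subtype_val) ?_
    have h1 : Continuous fun p : D =>
        (⟨(inv p.val.1, p.val.2), by
          simp only [RSGroupoid.composable, Set.mem_setOf_eq, src_inv]
          exact p.2⟩ : composable G) := by
      apply Continuous.subtype_mk
      exact (hinv.comp (continuous_fst.comp continuous_subtype_val)).prodMk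
        (continuous_snd.comp continuous_subtype_val)
    exact hmul.comp h1
  have hzD : ((x, mul x y) : G × G) ∈ D := by
    simp only [hD, Set.mem_setOf_eq]; exact (tgt_mul x y hxy).symm
  -- pull back U ×ˢ V along s
  have hpre : IsOpen ((fun p : D => ((p.val.1, mul (inv p.val.1) p.val.2) : G × G)) ⁻¹'
      (U ×ˢ V)) := hsc.isOpen_preimage _ (hU.prod hV)
  obtain ⟨U1, hU1, hU1eq⟩ := isOpen_induced_iff.mp hpre
  have hmemU1 : ((x, mul x y) : G × G) ∈ U1 := by
    have : (⟨(x, mul x y), hzD⟩ : D) ∈ (fun p : D =>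
        ((p.val.1, mul (inv p.val.1) p.val.2) : G × G)) ⁻¹' (U ×ˢ V) := by
      simp only [Set.mem_preimage, Set.mem_prod]
      exact ⟨hxU, by rw [rs_inv_mul_cancel x y hxy]; exact hyV⟩
    rw [← hU1eq] at this
    exact this
  obtain ⟨U', V', hU', hV', hxU', hzV', hU'V'⟩ := isOpen_prod_iff.mp hU1 x (mul x y) hmemU1
  -- use openness of the range map on U'
  obtain ⟨O, hO, hOeq⟩ := isOpen_induced_iff.mp (hr U' hU')
  have hOiff : ∀ g : G, g ∈ Set.range (tgt : G → G) → (g ∈ O ↔ g ∈ tgt '' U') := by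
    intro g hg
    constructor
    · intro hgO
      have : (⟨g, hg⟩ : Set.range (tgt : G → G)) ∈
          Set.rangeFactorization (tgt : G → G) '' U' := by rw [← hOeq]; exact hgO
      obtain ⟨a, haU', ha⟩ := this
      exact ⟨a, haU', congrArg Subtype.val ha⟩
    · rintro ⟨a, haU', ha⟩
      have : (⟨g, hg⟩ : Set.range (tgt : G → G)) ∈
          Set.rangeFactorization (tgt : G → G) '' U' :=
        ⟨a, haU', Subtype.ext ha⟩
      rw [← hOeq] at this; exact this
  refine ⟨V' ∩ tgt ⁻¹' O, ?_, hV'.inter (hO.preimage (by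
      have h1 : Continuous fun g : G =>
          (⟨(g, inv g), by
            simp only [RSGroupoid.composable, Set.mem_setOf_eq, tgt_inv]⟩ :
            composable G) :=
        Continuous.subtype_mk (continuous_id.prodMk hinv) _
      have h2 : Continuous fun g : G => mul g (inv g) := hmul.comp h1
      simpa only [RSGroupoid.mul_inv_self] using h2)), ?_, ?_⟩
  · -- V' ∩ tgt⁻¹ O ⊆ image
    rintro c ⟨hcV', hcO⟩
    have hc : tgt c ∈ tgt '' U' := (hOiff (tgt c) ⟨c, rfl⟩).mp hcO
    obtain ⟨a, haU', ha⟩ := hc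
    have hacD : ((a, c) : G × G) ∈ D := ha
    have hmem : (⟨(a, c), hacD⟩ : D) ∈ (fun p : D =>
        ((p.val.1, mul (inv p.val.1) p.val.2) : G × G)) ⁻¹' (U ×ˢ V) := by
      rw [← hU1eq]
      exact hU'V' ⟨haU', hcV'⟩
    simp only [Set.mem_preimage, Set.mem_prod] at hmem
    have hcomp : ((a, mul (inv a) c) : G × G) ∈ composable G := by
      simp only [RSGroupoid.composable, Set.mem_setOf_eq]
      rw [tgt_mul (inv a) c (by rw [src_inv, ha]), tgt_inv]
    refine ⟨⟨(a, mul (inv a) c), hcomp⟩, ?_, ?_⟩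
    · rw [← hU0eq] at hxyW ⊢
      exact hUV ⟨hmem.1, hmem.2⟩
    · simp only
      exact rs_mul_inv_cancel a c ha
  · exact hzV'
  · have h3 : tgt (mul x y) ∈ tgt '' U' := ⟨x, hxU', (tgt_mul x y hxy).symm⟩
    exact (hOiff _ ⟨mul x y, rfl⟩).mpr h3
end

section
/- Let G be a topological groupoid in which the multiplication map μ : G² → G is open and the unit space G⁰ is closed in G. Then the range map r : G → G⁰ is open. -/
open RSGroupoid

/-- For a topological groupoid in which the multiplication map `μ : G² → G` is open
and the unit space `G⁰` is closed in `G`, the range map `r : G → G⁰` is open. -/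
theorem stmt10 {G : Type*} [TopologicalSpace G] [RSGroupoid G]
    (hinv : Continuous (RSGroupoid.inv : G → G))
    (hmulc : Continuous fun p : RSGroupoid.composable G =>
      RSGroupoid.mul p.val.1 p.val.2)
    (hmulo : IsOpenMap fun p : RSGroupoid.composable G =>
      RSGroupoid.mul p.val.1 p.val.2)
    (hclosed : IsClosed (RSGroupoid.units G)) :
    IsOpenMap (Set.rangeFactorization (RSGroupoid.tgt : G → G)) := by
  intro U hU
  set W : Set (RSGroupoid.composable G) := {p | p.val.1 ∈ U} with hW
  have hWopen : IsOpen W := by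
    exact (continuous_fst.comp continuous_subtype_val).isOpen_preimage U hU
  have ht : IsOpen ((fun p : RSGroupoid.composable G =>
      RSGroupoid.mul p.val.1 p.val.2) '' W) := hmulo W hWopen
  rw [isOpen_induced_iff]
  refine ⟨_, ht, ?_⟩
  ext ⟨u, hu⟩
  simp only [Set.mem_preimage, Set.mem_image]
  constructor
  · rintro ⟨⟨⟨x, y⟩, hxy⟩, hxU, hmul⟩
    refine ⟨x, hxU, ?_⟩
    have h1 : RSGroupoid.tgt x = u := by
      obtain ⟨z, hz⟩ := hu
      have := RSGroupoid.tgt_mul x y hxy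
      rw [hmul] at this
      rw [← this, ← hz, RSGroupoid.tgt_tgt]
    exact Subtype.ext h1
  · rintro ⟨x, hxU, hx⟩
    refine ⟨⟨(x, RSGroupoid.inv x), (RSGroupoid.tgt_inv x).symm⟩, hxU, ?_⟩
    have : RSGroupoid.tgt x = u := congrArg Subtype.val hx
    simpa [RSGroupoid.mul_inv_self] using this
end

section
/- Let A be a C*-algebra, p ∈ A a projection, and let a ∈ A with pap = 0. If K ≥ 1 satisfies ‖a‖ ≤ K‖pa‖ and ‖a*‖ ≤ K‖pa*‖, then with δ(x) = i(xp − px) one has ‖a‖ ≤ K‖δ(a)‖. -/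
/-- Let `A` be a C*-algebra, `p ∈ A` a projection, and `δ(x) = i(xp − px)`.
If `a ∈ A` satisfies `pap = 0`, `‖a‖ ≤ K‖pa‖` and `‖a*‖ ≤ K‖p a*‖` for a constant
`K ≥ 1`, then `‖a‖ ≤ K‖δ(a)‖`. -/
theorem stmt18 {A : Type*} [NonUnitalCStarAlgebra A] [StarModule ℂ A]
    (p : A) (hp : IsSelfAdjoint p) (hp2 : p * p = p)
    (a : A) (hpap : p * a * p = 0)
    (K : ℝ) (hK : 1 ≤ K)
    (h1 : ‖a‖ ≤ K * ‖p * a‖) (h2 : ‖star a‖ ≤ K * ‖p * star a‖) :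
    ‖a‖ ≤ K * ‖Complex.I • (a * p - p * a)‖ := by
  have hpn : ‖p‖ ≤ 1 := by
    have h := CStarRing.norm_star_mul_self (x := p)
    rw [hp.star_eq, hp2] at h
    nlinarith [norm_nonneg p]
  have hmul : p * (a * p - p * a) = -(p * a) := by
    rw [mul_sub, ← mul_assoc, hpap, ← mul_assoc, hp2, zero_sub]
  have key : ‖p * a‖ ≤ ‖a * p - p * a‖ := by
    calc ‖p * a‖ = ‖p * (a * p - p * a)‖ := by rw [hmul, norm_neg]
      _ ≤ ‖p‖ * ‖a * p - p * a‖ := norm_mul_le _ _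
      _ ≤ 1 * ‖a * p - p * a‖ := by
          exact mul_le_mul_of_nonneg_right hpn (norm_nonneg _)
      _ = ‖a * p - p * a‖ := one_mul _
  have hI : ‖Complex.I • (a * p - p * a)‖ = ‖a * p - p * a‖ := by
    rw [norm_smul, Complex.norm_I, one_mul]
  rw [hI]
  calc ‖a‖ ≤ K * ‖p * a‖ := h1
    _ ≤ K * ‖a * p - p * a‖ := by
        exact mul_le_mul_of_nonneg_left key (by linarith)
end
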